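/- For every uncountable set T of conditions in 𝔸″ there exist a finite sequence u and an uncountable subset T′ ⊆ T such that every element of T′ has first coordinate u, and for every ℓ ∈ ℕ there is a subset F ⊆ T′ of cardinality ℓ which has a common lower bound in 𝔸″. -/

import Mathlib

open MeasureTheory

noncomputable section

/-- The binary-digit map sending `r ∈ [0,1)` to its sequence of binary digits,
so `binDigits r n` is the `n`-th binary digit of `r`. -/
def binDigits (r : ℝ) : ℕ → Bool := fun n => decide (⌊r * 2 ^ (n + 1)⌋ % 2 = 1)

/-- The uniform product ("coin-flipping") probability measure `μ` on Cantor space `2^ω`,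
realized as the pushforward of Lebesgue measure on `[0,1)` under the binary-digit map. -/
def μC : Measure (ℕ → Bool) := (volume.restrict (Set.Ico (0 : ℝ) 1)).map binDigits

/-- The basic clopen cylinder `[σ]` determined by a finite binary string `σ`. -/
def cyl (σ : List Bool) : Set (ℕ → Bool) :=
  {f | ∀ i : ℕ, ∀ h : i < σ.length, f i = σ.get ⟨i, h⟩}

/-- Property (*): for every binary string `σ` of length `i` not in `φ i`, the union of the
cylinders determined by proper extensions of `σ` appearing in some `φ j`, `j > i`,
has measure `< 2^{-i}`. -/
def StarProperty (φ : ℕ → Set (List Bool)) : Prop :=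
  ∀ i : ℕ, ∀ σ : List Bool, σ.length = i → σ ∉ φ i →
    μC (⋃ τ ∈ {τ : List Bool | σ <+: τ ∧ σ ≠ τ ∧ ∃ j, i < j ∧ τ ∈ φ j}, cyl τ)
      < (1 / 2 : ENNReal) ^ i

/-- A condition `(u, φ)` of the partial order `𝔸′`: `φ` assigns to each `i` a set of binary
strings of length `i`, satisfies (*), the union of all the corresponding cylinders has measure
`< 1/2`, and `u = φ↾n` is a finite initial segment of `φ` (represented by its domain `n`). -/
structure APrime where
  /-- the domain of the finite initial segment `u` (so `u = φ↾n`) -/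
  n : ℕ
  /-- the function `φ` -/
  φ : ℕ → Set (List Bool)
  hlen : ∀ i : ℕ, ∀ σ ∈ φ i, σ.length = i
  hstar : StarProperty φ
  hmeas : μC (⋃ i, ⋃ σ ∈ φ i, cyl σ) < 1 / 2

/-- The order of `𝔸′`: `(u,φ) ≤ (v,ψ)` iff `u ⊇ v` and every string in some `ψ i` extends a
string in some `φ j` with `j ≤ i`. -/
def APrimeLe (p q : APrime) : Prop :=
  q.n ≤ p.n ∧ (∀ i < q.n, p.φ i = q.φ i) ∧
    ∀ i : ℕ, ∀ σ ∈ q.φ i, ∃ j ≤ i, ∃ τ ∈ p.φ j, τ <+: σ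

/-- Membership in the suborder `𝔸″ ⊆ 𝔸′`.  (The inequalities `μ > 1/2 - 2^{-m}` and
`μ ≤ 1/2 - 2^{-m}` are stated additively as `μ + 2^{-m} > 1/2`, resp. `≤`, to express
real-number subtraction faithfully in `ℝ≥0∞`.) -/
def InAPP (p : APrime) : Prop :=
  ∃ m : ℕ,
    1 / 2 < μC (⋃ i < p.n, ⋃ σ ∈ p.φ i, cyl σ) + (1 / 2 : ENNReal) ^ m ∧
    μC (⋃ i < p.n - 1, ⋃ σ ∈ p.φ i, cyl σ) + (1 / 2 : ENNReal) ^ m ≤ 1 / 2 ∧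
    μC (⋃ i, ⋃ _ : p.n ≤ i, ⋃ σ ∈ p.φ i, cyl σ) < (1 / 2 : ENNReal) ^ (m + 7)

/-!
By pigeonhole, an uncountable subfamily has a common domain `n`, common initial segment `φ↾n`
and common witness `m` for `𝔸″`. Given `ℓ`, a second pigeonhole makes the strict inequalities of
all its members hold with a common slack `2^{-J}`, and gives a common finite set `C` of strings of
length `≥ n` whose cylinders cover every tail `⋃_{i ≥ n} φ(i)` up to measure `2^{-(J+ℓ+1)}`.

For `ℓ + 1` members `F` of this family, the tails of `ψ = ⋃_{p ∈ F} φ_p` exceed the tail of one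
fixed member `p₁` only by a set of measure `≤ 2^{-J}`, which the slack absorbs. Property (*) is
restored for `ψ` by adding, above level `n`, every extension of a string of `ψ` and every string
`τ` whose proper extensions cover measure `≥ 2^{-|τ|}`; the latter add only a null set, since
these extensions then already cover `[τ]` almost everywhere.
-/

open Filter Topology
open scoped ENNReal

lemma measurable_binDigits : Measurable binDigits :=
  measurable_pi_lambda _ fun _ =>
    (measurable_from_top (f := fun z : ℤ => decide (z % 2 = 1))).comp
      (Int.measurable_floor.comp (measurable_id.mul_const _))

lemma measurableSet_cyl (σ : List Bool) : MeasurableSet (cyl σ) := by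
  have : cyl σ = ⋂ i : Fin σ.length, (fun f : ℕ → Bool => f i) ⁻¹' {σ.get i} := by
    ext f
    simp only [cyl, Set.mem_ofPred_eq, Set.mem_iInter, Set.mem_preimage, Set.mem_singleton_iff]
    exact ⟨fun h i => h i i.2, fun h i hi => h ⟨i, hi⟩⟩
  rw [this]
  exact .iInter fun i => measurable_pi_apply _ (.singleton _)

lemma cyl_anti {σ τ : List Bool} (h : σ <+: τ) : cyl τ ⊆ cyl σ := by
  intro f hf i hi
  obtain ⟨t, rfl⟩ := h
  simpa [List.getElem_append, hi] using hf i (by simp; omega)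

lemma prefix_of_mem_cyl_of_length_le {σ τ : List Bool} {f : ℕ → Bool} (hσ : f ∈ cyl σ)
    (hτ : f ∈ cyl τ) (h : σ.length ≤ τ.length) : σ <+: τ := by
  refine List.prefix_iff_eq_take.mpr (List.ext_getElem (by simp [h]) fun i h₁ _ => ?_)
  have hσi := hσ i h₁
  have hτi := hτ i (h₁.trans_le h)
  simp only [List.get_eq_getElem, List.getElem_take] at hσi hτi ⊢
  rw [← hσi, ← hτi]

lemma natFloor_mul_two_pow_succ {r : ℝ} (hr : 0 ≤ r) (k : ℕ) :
    ⌊r * 2 ^ (k + 1)⌋₊ = 2 * ⌊r * 2 ^ k⌋₊ + (binDigits r k).toNat := by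
  have hdiv : ⌊r * 2 ^ (k + 1)⌋₊ / 2 = ⌊r * 2 ^ k⌋₊ := by
    rw [← Nat.floor_div_natCast]
    congr 1
    push_cast
    ring
  have hdigit : (binDigits r k).toNat = ⌊r * 2 ^ (k + 1)⌋₊ % 2 := by
    have hfloor := Int.natCast_floor_eq_floor (by positivity : 0 ≤ r * 2 ^ (k + 1))
    rcases Nat.mod_two_eq_zero_or_one ⌊r * 2 ^ (k + 1)⌋₊ with h | h <;>
      simp [binDigits, ← hfloor, h] <;> omega
  rw [hdigit, ← hdiv, Nat.div_add_mod]

lemma natFloor_eq_of_binDigits_eq {r s : ℝ} (hr : r ∈ Set.Ico (0 : ℝ) 1)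
    (hs : s ∈ Set.Ico (0 : ℝ) 1) (k : ℕ) (h : ∀ i < k, binDigits r i = binDigits s i) :
    ⌊r * 2 ^ k⌋₊ = ⌊s * 2 ^ k⌋₊ := by
  induction k with
  | zero => simp [Nat.floor_eq_zero.mpr hr.2, Nat.floor_eq_zero.mpr hs.2]
  | succ k ih =>
    rw [natFloor_mul_two_pow_succ hr.1, natFloor_mul_two_pow_succ hs.1,
      ih fun i hi => h i (by omega), h k (by omega)]

lemma μC_apply {S : Set (ℕ → Bool)} (hS : MeasurableSet S) :
    μC S = volume (binDigits ⁻¹' S ∩ Set.Ico 0 1) := by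
  rw [μC, Measure.map_apply measurable_binDigits hS,
    Measure.restrict_apply (measurable_binDigits hS)]

instance : IsProbabilityMeasure μC := ⟨by simp [μC_apply MeasurableSet.univ]⟩

lemma μC_cyl_le (σ : List Bool) : μC (cyl σ) ≤ (1 / 2) ^ σ.length := by
  rw [μC_apply (measurableSet_cyl σ)]
  set k := σ.length
  rcases (binDigits ⁻¹' cyl σ ∩ Set.Ico (0 : ℝ) 1).eq_empty_or_nonempty with hP | ⟨r₀, hr₀⟩
  · simp [hP]
  set N := ⌊r₀ * 2 ^ k⌋₊
  have hpos : (0 : ℝ) < 2 ^ k := by positivity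
  have hsub : binDigits ⁻¹' cyl σ ∩ Set.Ico 0 1 ⊆ Set.Ico (N / 2 ^ k) (N / 2 ^ k + 1 / 2 ^ k) := by
    rintro r ⟨hrσ, hr⟩
    have hN : ⌊r * 2 ^ k⌋₊ = N :=
      natFloor_eq_of_binDigits_eq hr hr₀.2 k fun i hi => (hrσ i hi).trans (hr₀.1 i hi).symm
    have hlow := hN ▸ Nat.floor_le (mul_nonneg hr.1 hpos.le)
    have hhigh := hN ▸ Nat.lt_floor_add_one (r * 2 ^ k)
    constructor
    · rwa [div_le_iff₀ hpos]
    · rw [← add_div, lt_div_iff₀ hpos]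
      exact hhigh
  calc (volume : Measure ℝ) (binDigits ⁻¹' cyl σ ∩ Set.Ico 0 1) ≤ ENNReal.ofReal (1 / 2 ^ k) := by
        simpa [Real.volume_Ico] using measure_mono (μ := volume) hsub
    _ = (1 / 2) ^ k := by
        rw [one_div, ← inv_pow, ENNReal.ofReal_pow (by norm_num),
          ENNReal.ofReal_inv_of_pos two_pos]
        norm_num

lemma measure_le_of_subset_union_null {α : Type*} [MeasurableSpace α] {μ : Measure α}
    {s t N : Set α} (h : s ⊆ t ∪ N) (hN : μ N = 0) : μ s ≤ μ t :=
  (measure_mono h).trans ((measure_union_le t N).trans (by rw [hN, add_zero]))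

lemma measure_lt_of_subset_union {α : Type*} [MeasurableSpace α] {μ : Measure α}
    {s t R : Set α} {ε b : ℝ≥0∞} (h : s ⊆ t ∪ R) (hR : μ R ≤ ε) (ht : μ t + ε < b) :
    μ s < b :=
  ((measure_mono h).trans ((measure_union_le t R).trans (add_le_add_right hR _))).trans_lt ht

lemma eventually_add_half_pow_lt {a b : ℝ≥0∞} (h : a < b) :
    ∀ᶠ J : ℕ in atTop, a + (1 / 2) ^ J < b := by
  have hlim : Tendsto (fun J : ℕ => a + (1 / 2 : ℝ≥0∞) ^ J) atTop (𝓝 (a + 0)) :=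
    tendsto_const_nhds.add (ENNReal.tendsto_pow_atTop_nhds_zero_of_lt_one (by norm_num))
  exact hlim.eventually_lt_const (by rwa [add_zero])

lemma natCast_mul_half_pow_le (k J : ℕ) : (k : ℝ≥0∞) * (1 / 2) ^ (J + k) ≤ (1 / 2) ^ J := by
  have hk : (k : ℝ≥0∞) * (1 / 2) ^ k ≤ 1 := by
    calc (k : ℝ≥0∞) * (1 / 2) ^ k ≤ 2 ^ k * (1 / 2) ^ k := by
          gcongr
          exact_mod_cast k.lt_two_pow_self.le
      _ = 1 := by rw [← mul_pow, ENNReal.mul_div_cancel two_ne_zero ENNReal.ofNat_ne_top, one_pow]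
  calc (k : ℝ≥0∞) * (1 / 2) ^ (J + k) = (1 / 2) ^ J * ((k : ℝ≥0∞) * (1 / 2) ^ k) := by ring
    _ ≤ (1 / 2) ^ J := mul_le_of_le_one_right' hk

lemma exists_not_countable_setOf {α β : Type*} [Countable β] {S : Set α} (hS : ¬ S.Countable)
    {P : α → β → Prop} (h : ∀ a ∈ S, ∃ b, P a b) : ∃ b, ¬ {a ∈ S | P a b}.Countable := by
  by_contra! hcount
  refine hS ((Set.countable_iUnion hcount).mono fun a ha => ?_)
  obtain ⟨b, hb⟩ := h a ha
  exact Set.mem_iUnion.mpr ⟨b, ha, hb⟩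

lemma exists_finset_measure_biUnion_diff_le {α ι : Type*} [MeasurableSpace α] [Countable ι]
    (μ : Measure α) [IsFiniteMeasure μ] {s : ι → Set α} (hs : ∀ i, MeasurableSet (s i))
    (S : Set ι) {η : ℝ≥0∞} (hη : 0 < η) :
    ∃ t : Finset ι, ↑t ⊆ S ∧ μ ((⋃ i ∈ S, s i) \ ⋃ i ∈ t, s i) ≤ η := by
  classical
  set U := ⋃ i ∈ S, s i
  by_cases hU : μ U ≤ η
  · exact ⟨∅, by simp, by simpa using hU⟩
  set D := {t : Finset ι | ↑t ⊆ S}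
  have hUD : U = ⋃ t ∈ D, ⋃ i ∈ t, s i := by
    ext x
    simp only [U, D, Set.mem_iUnion, Set.mem_ofPred_eq, exists_prop]
    constructor
    · rintro ⟨i, hi, hx⟩
      exact ⟨{i}, by simpa using hi, i, by simp, hx⟩
    · rintro ⟨t, htS, i, hi, hx⟩
      exact ⟨i, htS hi, hx⟩
  have hdir : DirectedOn (Function.onFun (· ⊆ ·) fun t : Finset ι => ⋃ i ∈ t, s i) D := by
    intro t₁ h₁ t₂ h₂
    refine ⟨t₁ ∪ t₂, by simpa [D] using Set.union_subset h₁ h₂, ?_, ?_⟩ <;>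
      exact Set.biUnion_subset_biUnion_left (by simp)
  have hsup : μ U = ⨆ t ∈ D, μ (⋃ i ∈ t, s i) := by
    rw [hUD]
    exact measure_biUnion_eq_iSup (Set.to_countable D) hdir
  obtain ⟨t, htD, ht⟩ : ∃ t ∈ D, μ U - η < μ (⋃ i ∈ t, s i) := by
    rw [← lt_biSup_iff, ← hsup]
    exact ENNReal.sub_lt_self (measure_ne_top μ U) (hη.trans (not_le.mp hU)).ne' hη.ne'
  have htU : ⋃ i ∈ t, s i ⊆ U := Set.biUnion_subset_biUnion_left htD
  refine ⟨t, htD, ?_⟩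
  rw [measure_sdiff htU (Finset.measurableSet_biUnion t fun i _ => hs i).nullMeasurableSet
    (measure_ne_top μ _), tsub_le_iff_right, add_comm, ← tsub_le_iff_right]
  exact ht.le

def cylUnion (φ : ℕ → Set (List Bool)) : Set (ℕ → Bool) := ⋃ i, ⋃ σ ∈ φ i, cyl σ

def cylUnionBelow (φ : ℕ → Set (List Bool)) (n : ℕ) : Set (ℕ → Bool) :=
  ⋃ i < n, ⋃ σ ∈ φ i, cyl σ

def cylUnionFrom (φ : ℕ → Set (List Bool)) (n : ℕ) : Set (ℕ → Bool) :=
  ⋃ i, ⋃ _ : n ≤ i, ⋃ σ ∈ φ i, cyl σ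

def extUnion (φ : ℕ → Set (List Bool)) (i : ℕ) (σ : List Bool) : Set (ℕ → Bool) :=
  ⋃ τ ∈ {τ : List Bool | σ <+: τ ∧ σ ≠ τ ∧ ∃ j, i < j ∧ τ ∈ φ j}, cyl τ

section Unions

variable {φ ψ : ℕ → Set (List Bool)} {n i j : ℕ} {σ τ : List Bool} {f : ℕ → Bool}

lemma mem_cylUnion : f ∈ cylUnion φ ↔ ∃ i, ∃ σ ∈ φ i, f ∈ cyl σ := by
  simp [cylUnion]

lemma mem_cylUnionFrom : f ∈ cylUnionFrom φ n ↔ ∃ i, n ≤ i ∧ ∃ σ ∈ φ i, f ∈ cyl σ := by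
  simp [cylUnionFrom]

lemma mem_extUnion :
    f ∈ extUnion φ i σ ↔ ∃ τ, (σ <+: τ ∧ σ ≠ τ ∧ ∃ j, i < j ∧ τ ∈ φ j) ∧ f ∈ cyl τ := by
  simp [extUnion]

lemma cyl_subset_cylUnion (hσ : σ ∈ φ i) : cyl σ ⊆ cylUnion φ :=
  fun _ hf => mem_cylUnion.mpr ⟨i, σ, hσ, hf⟩

lemma cyl_subset_cylUnionFrom (hi : n ≤ i) (hσ : σ ∈ φ i) : cyl σ ⊆ cylUnionFrom φ n :=
  fun _ hf => mem_cylUnionFrom.mpr ⟨i, hi, σ, hσ, hf⟩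

lemma cyl_subset_extUnion (hστ : σ <+: τ) (hne : σ ≠ τ) (hj : i < j) (hτ : τ ∈ φ j) :
    cyl τ ⊆ extUnion φ i σ :=
  fun _ hf => mem_extUnion.mpr ⟨τ, ⟨hστ, hne, j, hj, hτ⟩, hf⟩

lemma cylUnionFrom_subset_cylUnion : cylUnionFrom φ n ⊆ cylUnion φ := by
  intro f hf
  obtain ⟨i, -, σ, hσ, hf⟩ := mem_cylUnionFrom.mp hf
  exact cyl_subset_cylUnion hσ hf

lemma cylUnionBelow_subset_cylUnion : cylUnionBelow φ n ⊆ cylUnion φ := by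
  simp only [cylUnionBelow, cylUnion]
  exact Set.iUnion_mono fun i => Set.iUnion_subset fun _ => le_rfl

lemma cylUnion_eq_cylUnionBelow_union_cylUnionFrom :
    cylUnion φ = cylUnionBelow φ n ∪ cylUnionFrom φ n := by
  refine subset_antisymm (fun f hf => ?_)
    (Set.union_subset cylUnionBelow_subset_cylUnion cylUnionFrom_subset_cylUnion)
  obtain ⟨i, σ, hσ, hf⟩ := mem_cylUnion.mp hf
  by_cases hi : i < n
  · exact Or.inl (Set.mem_biUnion hi (Set.mem_biUnion hσ hf))
  · exact Or.inr (cyl_subset_cylUnionFrom (not_lt.mp hi) hσ hf)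

lemma cylUnionBelow_congr (h : ∀ i < n, φ i = ψ i) : cylUnionBelow φ n = cylUnionBelow ψ n :=
  Set.iUnion₂_congr fun i hi => by rw [h i hi]

lemma extUnion_subset_cyl : extUnion φ i σ ⊆ cyl σ := by
  intro f hf
  obtain ⟨τ, ⟨hστ, -⟩, hf⟩ := mem_extUnion.mp hf
  exact cyl_anti hστ hf

lemma measurableSet_extUnion : MeasurableSet (extUnion φ i σ) :=
  .biUnion (Set.to_countable _) fun τ _ => measurableSet_cyl τ

end Unions

def InAPPWith (p : APrime) (m : ℕ) : Prop :=
  1 / 2 < μC (cylUnionBelow p.φ p.n) + (1 / 2) ^ m ∧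
    μC (cylUnionBelow p.φ (p.n - 1)) + (1 / 2) ^ m ≤ 1 / 2 ∧
    μC (cylUnionFrom p.φ p.n) < (1 / 2) ^ (m + 7)

lemma inAPP_iff {p : APrime} : InAPP p ↔ ∃ m, InAPPWith p m := Iff.rfl

def HasSlack (p : APrime) (m J : ℕ) : Prop :=
  μC (cylUnion p.φ) + (1 / 2) ^ J < 1 / 2 ∧
    μC (cylUnionFrom p.φ p.n) + (1 / 2) ^ J < (1 / 2) ^ (m + 7) ∧
    ∀ σ : List Bool, σ.length < p.n → σ ∉ p.φ σ.length →
      μC (extUnion p.φ σ.length σ) + (1 / 2) ^ J < (1 / 2) ^ σ.length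

lemma eventually_hasSlack {p : APrime} {m : ℕ} (h : InAPPWith p m) :
    ∀ᶠ J in atTop, HasSlack p m J := by
  have hfin : {σ : List Bool | σ.length < p.n ∧ σ ∉ p.φ σ.length}.Finite :=
    (List.finite_length_lt Bool p.n).subset fun σ hσ => hσ.1
  have hstar : ∀ᶠ J in atTop, ∀ σ ∈ {σ : List Bool | σ.length < p.n ∧ σ ∉ p.φ σ.length},
      μC (extUnion p.φ σ.length σ) + (1 / 2) ^ J < (1 / 2) ^ σ.length :=
    (hfin.eventually_all).mpr fun σ hσ => eventually_add_half_pow_lt (p.hstar _ σ rfl hσ.2)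
  filter_upwards [eventually_add_half_pow_lt p.hmeas, eventually_add_half_pow_lt h.2.2, hstar]
    with J h₁ h₂ h₃
  exact ⟨h₁, h₂, fun σ hlt hσ => h₃ σ ⟨hlt, hσ⟩⟩

lemma exists_hasSlack_finset_approx {p : APrime} {m : ℕ} (h : InAPPWith p m) (k : ℕ) :
    ∃ J, ∃ C : Finset (List Bool), HasSlack p m J ∧ (∀ σ ∈ C, ∃ i, p.n ≤ i ∧ σ ∈ p.φ i) ∧
      μC (cylUnionFrom p.φ p.n \ ⋃ σ ∈ C, cyl σ) ≤ (1 / 2) ^ (J + k) := by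
  obtain ⟨J, hJ⟩ := (eventually_hasSlack h).exists
  obtain ⟨C, hCsub, hC⟩ := exists_finset_measure_biUnion_diff_le μC measurableSet_cyl
    {σ | ∃ i, p.n ≤ i ∧ σ ∈ p.φ i} (η := (1 / 2) ^ (J + k)) (ENNReal.pow_pos (by norm_num) _)
  refine ⟨J, C, hJ, fun σ hσ => hCsub hσ, le_of_eq_of_le ?_ hC⟩
  congr 2
  ext f
  simp [mem_cylUnionFrom]

def IsGraded (ψ : ℕ → Set (List Bool)) : Prop := ∀ i, ∀ σ ∈ ψ i, σ.length = i

def heavy (ψ : ℕ → Set (List Bool)) : Set (List Bool) :=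
  {τ | (1 / 2) ^ τ.length ≤ μC (extUnion ψ τ.length τ)}

def defect (ψ : ℕ → Set (List Bool)) : Set (ℕ → Bool) :=
  ⋃ τ ∈ heavy ψ, cyl τ \ extUnion ψ τ.length τ

def saturate (n : ℕ) (ψ : ℕ → Set (List Bool)) (i : ℕ) : Set (List Bool) :=
  if i < n then ψ i
  else {σ | σ.length = i ∧ ((∃ j, n ≤ j ∧ ∃ ρ ∈ ψ j, ρ <+: σ) ∨ σ ∈ heavy ψ)}

section Saturate

variable {ψ : ℕ → Set (List Bool)} {n i : ℕ} {σ τ : List Bool}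

/-- Extensions of a heavy `τ` cover `[τ]` up to a null set, since `μ [τ] ≤ 2^{-|τ|}`. -/
lemma measure_defect : μC (defect ψ) = 0 := by
  refine (measure_biUnion_null_iff (Set.to_countable _)).mpr fun τ hτ => ?_
  rw [measure_sdiff extUnion_subset_cyl measurableSet_extUnion.nullMeasurableSet
    (measure_ne_top _ _)]
  exact tsub_eq_zero_of_le ((μC_cyl_le τ).trans hτ)

lemma cyl_subset_extUnion_union_defect (hτ : τ ∈ heavy ψ) :
    cyl τ ⊆ extUnion ψ τ.length τ ∪ defect ψ := fun f hf =>
  (em (f ∈ extUnion ψ τ.length τ)).imp id fun hf' => Set.mem_biUnion hτ ⟨hf, hf'⟩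

lemma extUnion_anti (hψ : IsGraded ψ) (hστ : σ <+: τ) (hlt : σ.length < τ.length) :
    extUnion ψ τ.length τ ⊆ extUnion ψ σ.length σ := by
  intro f hf
  obtain ⟨ρ, ⟨hτρ, -, j, hj, hρ⟩, hf⟩ := mem_extUnion.mp hf
  refine cyl_subset_extUnion (hστ.trans hτρ) ?_ (hlt.trans hj) hρ hf
  rintro rfl
  have := hψ j σ hρ
  omega

lemma saturate_of_lt (hi : i < n) : saturate n ψ i = ψ i := if_pos hi

lemma mem_saturate_of_le (hi : n ≤ i) : σ ∈ saturate n ψ i ↔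
    σ.length = i ∧ ((∃ j, n ≤ j ∧ ∃ ρ ∈ ψ j, ρ <+: σ) ∨ σ ∈ heavy ψ) := by
  rw [saturate, if_neg (not_lt.mpr hi)]
  rfl

lemma isGraded_saturate (hψ : IsGraded ψ) : IsGraded (saturate n ψ) := by
  intro i σ hσ
  rcases lt_or_ge i n with hi | hi
  · rw [saturate_of_lt hi] at hσ
    exact hψ i σ hσ
  · exact ((mem_saturate_of_le hi).mp hσ).1

lemma subset_saturate (hψ : IsGraded ψ) : ψ i ⊆ saturate n ψ i := by
  intro σ hσ
  rcases lt_or_ge i n with hi | hi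
  · rwa [saturate_of_lt hi]
  · exact (mem_saturate_of_le hi).mpr ⟨hψ i σ hσ, Or.inl ⟨i, hi, σ, hσ, List.prefix_refl σ⟩⟩

lemma extUnion_saturate_subset (hψ : IsGraded ψ) (hσ : σ ∉ saturate n ψ σ.length) :
    extUnion (saturate n ψ) σ.length σ ⊆ extUnion ψ σ.length σ ∪ defect ψ := by
  intro f hf
  obtain ⟨τ, ⟨hστ, hne, j, hj, hτ⟩, hfτ⟩ := mem_extUnion.mp hf
  rcases lt_or_ge j n with hjn | hjn
  · rw [saturate_of_lt hjn] at hτ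
    exact Or.inl (cyl_subset_extUnion hστ hne hj hτ hfτ)
  obtain ⟨rfl, ⟨j₀, hj₀, ρ, hρ, hρτ⟩ | hheavy⟩ := (mem_saturate_of_le hjn).mp hτ
  · have hρlen := hψ j₀ ρ hρ
    rcases le_or_gt ρ.length σ.length with hle | hlt
    · refine absurd ((mem_saturate_of_le (by omega)).mpr ⟨rfl, Or.inl ⟨j₀, hj₀, ρ, hρ, ?_⟩⟩) hσ
      exact List.prefix_of_prefix_length_le hρτ hστ hle
    · refine Or.inl (cyl_subset_extUnion ?_ ?_ (hρlen ▸ hlt) hρ (cyl_anti hρτ hfτ))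
      · exact List.prefix_of_prefix_length_le hστ hρτ hlt.le
      · rintro rfl
        omega
  · exact (cyl_subset_extUnion_union_defect hheavy hfτ).imp_left
      fun h => extUnion_anti hψ hστ (by omega) h

lemma starProperty_saturate (hψ : IsGraded ψ)
    (hlow : ∀ σ : List Bool, σ.length < n → σ ∉ ψ σ.length →
      μC (extUnion ψ σ.length σ) < (1 / 2) ^ σ.length) :
    StarProperty (saturate n ψ) := by
  rintro _ σ rfl hσ
  have hle : μC (extUnion (saturate n ψ) σ.length σ) ≤ μC (extUnion ψ σ.length σ) :=
    measure_le_of_subset_union_null (extUnion_saturate_subset hψ hσ) measure_defect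
  refine hle.trans_lt ?_
  rcases lt_or_ge σ.length n with hlt | hge
  · rw [saturate_of_lt hlt] at hσ
    exact hlow σ hlt hσ
  · by_contra! hheavy
    exact hσ ((mem_saturate_of_le hge).mpr ⟨rfl, Or.inr hheavy⟩)

lemma cylUnionFrom_saturate_subset :
    cylUnionFrom (saturate n ψ) n ⊆ cylUnionFrom ψ n ∪ defect ψ := by
  intro f hf
  obtain ⟨i, hi, σ, hσ, hfσ⟩ := mem_cylUnionFrom.mp hf
  obtain ⟨rfl, ⟨j, hj, ρ, hρ, hρσ⟩ | hheavy⟩ := (mem_saturate_of_le hi).mp hσ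
  · exact Or.inl (cyl_subset_cylUnionFrom hj hρ (cyl_anti hρσ hfσ))
  · refine (cyl_subset_extUnion_union_defect hheavy hfσ).imp_left fun hf' => ?_
    obtain ⟨τ, ⟨-, -, j, hj, hτ⟩, hfτ⟩ := mem_extUnion.mp hf'
    exact cyl_subset_cylUnionFrom (by omega) hτ hfτ

lemma cylUnionBelow_saturate (hk : i ≤ n) : cylUnionBelow (saturate n ψ) i = cylUnionBelow ψ i :=
  cylUnionBelow_congr fun _ hj => saturate_of_lt (hj.trans_le hk)

lemma cylUnion_saturate_subset :
    cylUnion (saturate n ψ) ⊆ cylUnion ψ ∪ defect ψ := by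
  rw [cylUnion_eq_cylUnionBelow_union_cylUnionFrom (n := n), cylUnionBelow_saturate le_rfl,
    cylUnion_eq_cylUnionBelow_union_cylUnionFrom (n := n), Set.union_assoc]
  exact Set.union_subset_union_right _ cylUnionFrom_saturate_subset

end Saturate

lemma aPrimeLe_of_subset {p q : APrime} (hn : p.n ≤ q.n) (hhead : ∀ i < p.n, q.φ i = p.φ i)
    (hsub : ∀ i, p.φ i ⊆ q.φ i) : APrimeLe q p :=
  ⟨hn, hhead, fun i σ hσ => ⟨i, le_rfl, σ, hsub i hσ, List.prefix_refl σ⟩⟩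

def joinφ (F : Finset APrime) (i : ℕ) : Set (List Bool) := ⋃ p ∈ F, p.φ i

def tailResidual (F : Finset APrime) (n : ℕ) (C : Set (List Bool)) : Set (ℕ → Bool) :=
  ⋃ p ∈ F, cylUnionFrom p.φ n \ ⋃ σ ∈ C, cyl σ

section Join

variable {F : Finset APrime} {p₁ : APrime} {C : Set (List Bool)} {n i : ℕ} {σ : List Bool}

lemma isGraded_joinφ : IsGraded (joinφ F) := by
  intro i σ hσ
  obtain ⟨p, -, hσ⟩ := Set.mem_iUnion₂.mp hσ
  exact p.hlen i σ hσ

lemma subset_joinφ {p : APrime} (hp : p ∈ F) : p.φ i ⊆ joinφ F i :=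
  Set.subset_biUnion_of_mem (u := fun p : APrime => p.φ i) hp

lemma joinφ_of_lt (hp₁ : p₁ ∈ F) (hagree : ∀ p ∈ F, ∀ i < n, p.φ i = p₁.φ i) (hi : i < n) :
    joinφ F i = p₁.φ i :=
  subset_antisymm (Set.iUnion₂_subset fun p hp => (hagree p hp i hi).le) (subset_joinφ hp₁)

lemma measure_tailResidual_le {η : ℝ≥0∞}
    (hCap : ∀ p ∈ F, μC (cylUnionFrom p.φ n \ ⋃ σ ∈ C, cyl σ) ≤ η) :
    μC (tailResidual F n C) ≤ F.card * η := by
  calc μC (tailResidual F n C) ≤ ∑ p ∈ F, μC (cylUnionFrom p.φ n \ ⋃ σ ∈ C, cyl σ) :=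
        measure_biUnion_finset_le F _
    _ ≤ F.card • η := Finset.sum_le_card_nsmul F _ η hCap
    _ = F.card * η := nsmul_eq_mul _ _

lemma cylUnionFrom_joinφ_subset (hC : ∀ σ ∈ C, ∃ i, n ≤ i ∧ σ ∈ p₁.φ i) :
    cylUnionFrom (joinφ F) n ⊆ cylUnionFrom p₁.φ n ∪ tailResidual F n C := by
  intro f hf
  obtain ⟨i, hi, σ, hσ, hfσ⟩ := mem_cylUnionFrom.mp hf
  obtain ⟨p, hp, hσ⟩ := Set.mem_iUnion₂.mp hσ
  by_cases hfC : f ∈ ⋃ σ ∈ C, cyl σ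
  · obtain ⟨τ, hτC, hfτ⟩ := Set.mem_iUnion₂.mp hfC
    obtain ⟨j, hj, hτ⟩ := hC τ hτC
    exact Or.inl (cyl_subset_cylUnionFrom hj hτ hfτ)
  · exact Or.inr (Set.mem_biUnion hp ⟨cyl_subset_cylUnionFrom hi hσ hfσ, hfC⟩)

/-- A point of `[σ]` in the cylinder of a string of `C` lies in a proper extension of `σ` in `p₁`,
because the strings of `C` are longer than `σ`. -/
lemma extUnion_joinφ_subset (hC : ∀ σ ∈ C, ∃ i, n ≤ i ∧ σ ∈ p₁.φ i) (hp₁ : p₁ ∈ F)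
    (hagree : ∀ p ∈ F, ∀ i < n, p.φ i = p₁.φ i) (hσn : σ.length < n) :
    extUnion (joinφ F) σ.length σ ⊆ extUnion p₁.φ σ.length σ ∪ tailResidual F n C := by
  intro f hf
  obtain ⟨τ, ⟨hστ, hne, j, hj, hτ⟩, hfτ⟩ := mem_extUnion.mp hf
  rcases lt_or_ge j n with hjn | hjn
  · rw [joinφ_of_lt hp₁ hagree hjn] at hτ
    exact Or.inl (cyl_subset_extUnion hστ hne hj hτ hfτ)
  refine (cylUnionFrom_joinφ_subset hC (cyl_subset_cylUnionFrom hjn hτ hfτ)).imp_left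
    fun hf' => ?_
  obtain ⟨i, hi, ρ, hρ, hfρ⟩ := mem_cylUnionFrom.mp hf'
  have hρlen := p₁.hlen i ρ hρ
  refine cyl_subset_extUnion ?_ ?_ (by omega) hρ hfρ
  · exact prefix_of_mem_cyl_of_length_le (cyl_anti hστ hfτ) hfρ (by omega)
  · rintro rfl
    omega

lemma cylUnion_joinφ_subset (hC : ∀ σ ∈ C, ∃ i, n ≤ i ∧ σ ∈ p₁.φ i) (hp₁ : p₁ ∈ F)
    (hagree : ∀ p ∈ F, ∀ i < n, p.φ i = p₁.φ i) :
    cylUnion (joinφ F) ⊆ cylUnion p₁.φ ∪ tailResidual F n C := by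
  rw [cylUnion_eq_cylUnionBelow_union_cylUnionFrom (n := n),
    cylUnionBelow_congr fun i hi => joinφ_of_lt hp₁ hagree hi,
    cylUnion_eq_cylUnionBelow_union_cylUnionFrom (n := n), Set.union_assoc]
  exact Set.union_subset_union_right _ (cylUnionFrom_joinφ_subset hC)

end Join

theorem exists_inAPP_forall_aPrimeLe {F : Finset APrime} {p₁ : APrime} {C : Set (List Bool)}
    {n m J : ℕ} {η : ℝ≥0∞} (hp₁ : p₁ ∈ F) (hn : ∀ p ∈ F, p.n = n)
    (hagree : ∀ p ∈ F, ∀ i < n, p.φ i = p₁.φ i) (hm : InAPPWith p₁ m) (hJ : HasSlack p₁ m J)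
    (hC : ∀ σ ∈ C, ∃ i, n ≤ i ∧ σ ∈ p₁.φ i)
    (hCap : ∀ p ∈ F, μC (cylUnionFrom p.φ n \ ⋃ σ ∈ C, cyl σ) ≤ η)
    (hsum : F.card * η ≤ (1 / 2) ^ J) :
    ∃ q, InAPP q ∧ ∀ p ∈ F, APrimeLe q p := by
  obtain rfl := hn p₁ hp₁
  set n := p₁.n
  have hR : μC (tailResidual F n C) ≤ (1 / 2) ^ J := (measure_tailResidual_le hCap).trans hsum
  have hψ : IsGraded (joinφ F) := isGraded_joinφ
  have hstar : StarProperty (saturate n (joinφ F)) := by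
    refine starProperty_saturate hψ fun σ hσn hσ => ?_
    rw [joinφ_of_lt hp₁ hagree hσn] at hσ
    exact measure_lt_of_subset_union (extUnion_joinφ_subset hC hp₁ hagree hσn) hR
      (hJ.2.2 σ hσn hσ)
  have hmeas : μC (cylUnion (saturate n (joinφ F))) < 1 / 2 :=
    (measure_le_of_subset_union_null cylUnion_saturate_subset measure_defect).trans_lt
      (measure_lt_of_subset_union (cylUnion_joinφ_subset hC hp₁ hagree) hR hJ.1)
  let q : APrime := ⟨n, saturate n (joinφ F), isGraded_saturate hψ, hstar, hmeas⟩
  have hhead : ∀ k ≤ n, cylUnionBelow q.φ k = cylUnionBelow p₁.φ k := fun k hk =>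
    (cylUnionBelow_saturate hk).trans
      (cylUnionBelow_congr fun i hi => joinφ_of_lt hp₁ hagree (hi.trans_le hk))
  refine ⟨q, inAPP_iff.mpr ⟨m, ?_, ?_, ?_⟩, fun p hp => aPrimeLe_of_subset (hn p hp).le ?_ ?_⟩
  · rw [hhead n le_rfl]
    exact hm.1
  · rw [hhead (n - 1) (Nat.sub_le n 1)]
    exact hm.2.1
  · exact (measure_le_of_subset_union_null cylUnionFrom_saturate_subset measure_defect).trans_lt
      (measure_lt_of_subset_union (cylUnionFrom_joinφ_subset hC) hR hJ.2.1)
  · intro i hi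
    rw [hn p hp] at hi
    exact (saturate_of_lt hi).trans ((joinφ_of_lt hp₁ hagree hi).trans (hagree p hp i hi).symm)
  · exact fun i => (subset_joinφ hp).trans (subset_saturate hψ)

lemma exists_finset_eq_head (p : APrime) :
    ∃ H : Finset (List Bool), ∀ i < p.n, p.φ i = {σ | σ ∈ H ∧ σ.length = i} := by
  have hfin : (⋃ i < p.n, p.φ i).Finite :=
    (Set.finite_lt_nat p.n).biUnion fun i _ =>
      (List.finite_length_eq Bool i).subset fun σ hσ => p.hlen i σ hσ
  refine ⟨hfin.toFinset, fun i hi => Set.ext fun σ => ?_⟩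
  simp only [Set.Finite.mem_toFinset, Set.mem_iUnion₂, Set.mem_ofPred_eq, exists_prop]
  constructor
  · exact fun hσ => ⟨⟨i, hi, hσ⟩, p.hlen i σ hσ⟩
  · rintro ⟨⟨j, -, hσ⟩, rfl⟩
    rwa [← p.hlen j σ hσ] at hσ

lemma exists_not_countable_uniform_head {T : Set APrime} (hT : ∀ p ∈ T, InAPP p)
    (hunc : ¬ T.Countable) : ∃ (n m : ℕ) (H : Finset (List Bool)), ¬ {p ∈ T | p.n = n ∧
      InAPPWith p m ∧ ∀ i < n, p.φ i = {σ | σ ∈ H ∧ σ.length = i}}.Countable := by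
  obtain ⟨⟨n, m, H⟩, h⟩ := exists_not_countable_setOf hunc
    (P := fun p (b : ℕ × ℕ × Finset (List Bool)) =>
      p.n = b.1 ∧ InAPPWith p b.2.1 ∧ ∀ i < b.1, p.φ i = {σ | σ ∈ b.2.2 ∧ σ.length = i})
    fun p hp => by
      obtain ⟨m, hm⟩ := hT p hp
      obtain ⟨H, hH⟩ := exists_finset_eq_head p
      exact ⟨⟨p.n, m, H⟩, rfl, hm, hH⟩
  exact ⟨n, m, H, h⟩

lemma exists_not_countable_uniform_approx {S : Set APrime} {n m : ℕ}
    (hS : ∀ p ∈ S, p.n = n ∧ InAPPWith p m) (hunc : ¬ S.Countable) (k : ℕ) :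
    ∃ (J : ℕ) (C : Finset (List Bool)), ¬ {p ∈ S | HasSlack p m J ∧
      (∀ σ ∈ C, ∃ i, n ≤ i ∧ σ ∈ p.φ i) ∧
      μC (cylUnionFrom p.φ n \ ⋃ σ ∈ C, cyl σ) ≤ (1 / 2) ^ (J + k)}.Countable := by
  obtain ⟨⟨J, C⟩, h⟩ := exists_not_countable_setOf hunc
    (P := fun p (b : ℕ × Finset (List Bool)) => HasSlack p m b.1 ∧
      (∀ σ ∈ b.2, ∃ i, n ≤ i ∧ σ ∈ p.φ i) ∧
      μC (cylUnionFrom p.φ n \ ⋃ σ ∈ b.2, cyl σ) ≤ (1 / 2) ^ (b.1 + k))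
    fun p hp => by
      obtain ⟨J, C, hJC⟩ := (hS p hp).1 ▸ exists_hasSlack_finset_approx (hS p hp).2 k
      exact ⟨(J, C), hJC⟩
  exact ⟨J, C, h⟩

/-- For every uncountable set `T` of conditions of `𝔸″` there are an initial segment `u`
(with domain `n`) and an uncountable `T' ⊆ T` all of whose elements have first coordinate `u`,
such that for every `ℓ` some `F ⊆ T'` of cardinality `ℓ` has a common lower bound in `𝔸″`. -/
theorem APP_uncountable_has_centered_refinement
    (T : Set APrime) (hT : ∀ p ∈ T, InAPP p) (hunc : ¬ T.Countable) :
    ∃ (n : ℕ) (u : ℕ → Set (List Bool)) (T' : Set APrime),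
      T' ⊆ T ∧ ¬ T'.Countable ∧
      (∀ p ∈ T', p.n = n ∧ ∀ i < n, p.φ i = u i) ∧
      (∀ ℓ : ℕ, ∃ F ⊆ T', F.Finite ∧ F.ncard = ℓ ∧
        ∃ q : APrime, InAPP q ∧ ∀ p ∈ F, APrimeLe q p) := by
  classical
  obtain ⟨n, m, H, hT'⟩ := exists_not_countable_uniform_head hT hunc
  refine ⟨n, fun i => {σ | σ ∈ H ∧ σ.length = i}, _, Set.sep_subset _ _, hT',
    fun p hp => ⟨hp.2.1, hp.2.2.2⟩, fun ℓ => ?_⟩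
  obtain ⟨J, C, hS⟩ := exists_not_countable_uniform_approx
    (fun p hp => ⟨hp.2.1, hp.2.2.1⟩) hT' (ℓ + 1)
  have hSinf : Set.Infinite _ := fun h => hS h.countable
  obtain ⟨p₁, hp₁⟩ := hSinf.nonempty
  obtain ⟨F, hFS, hFcard⟩ := hSinf.exists_subset_card_eq ℓ
  have hS₁ : ∀ p ∈ insert p₁ F, _ := fun p hp =>
    (Finset.coe_insert p₁ F ▸ Set.insert_subset hp₁ hFS) (Finset.mem_coe.mpr hp)
  have hsum : ((insert p₁ F).card : ℝ≥0∞) * (1 / 2) ^ (J + (ℓ + 1)) ≤ (1 / 2) ^ J := by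
    refine le_trans ?_ (natCast_mul_half_pow_le (ℓ + 1) J)
    gcongr
    exact_mod_cast hFcard ▸ Finset.card_insert_le p₁ F
  -- `p₁` is the reference condition of the amalgamation, also when `ℓ = 0`
  obtain ⟨q, hq, hqle⟩ := exists_inAPP_forall_aPrimeLe (F := insert p₁ F) (C := ↑C)
    (Finset.mem_insert_self p₁ F) (fun p hp => (hS₁ p hp).1.2.1)
    (fun p hp i hi => ((hS₁ p hp).1.2.2.2 i hi).trans (hp₁.1.2.2.2 i hi).symm)
    hp₁.1.2.2.1 hp₁.2.1 hp₁.2.2.1 (fun p hp => (hS₁ p hp).2.2.2) hsum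
  exact ⟨F, fun p hp => (hFS hp).1, F.finite_toSet, (Set.ncard_coe_finset F).trans hFcard, q, hq,
    fun p hp => hqle p (Finset.mem_insert_of_mem hp)⟩

end
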